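/- Assume (A1), (A2), (A3). For 0 ≤ μ < m set J_μ = {(i,ν) ∈ ℕ×ℕ^N : i+|ν| ≥ 2, |ν| ≥ 1, (∂ₓ^μ a_{i,ν})(0) ≠ 0}; for ν with |ν| ≥ 1 set K_ν = {(j,α) ∈ I_m : ν_{j,α} > 0} and m_{ν,μ} = max_{(j,α)∈K_ν} (j + max{α, μ+σ₀(α−μ)}). Then the index s₀ = 1 + max[0, max_{0≤μ<m} max_{(j,α)∈I_m} (j+μ+σ₀(α−μ)−m)/L_{μ,j,α}] equals 1 + max[0, max_{0≤μ<m} sup_{(i,ν)∈J_μ} (m_{ν,μ}−m)/(i+|ν|−1)]. -/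

import Mathlib

open PowerSeries Finset
open scoped Classical

noncomputable section

/-- The index set `I_m = {(j,α) ∈ ℕ×ℕ : j+α ≤ m, j < m}` as a finset. -/
def ImF (m : ℕ) : Finset (ℕ × ℕ) :=
  (Finset.range (m + 1) ×ˢ Finset.range (m + 1)).filter fun p => p.1 + p.2 ≤ m ∧ p.1 < m

/-- Coefficientwise derivative `∂ₓ` on `ℂ[[x]]`. -/
def dX (f : PowerSeries ℂ) : PowerSeries ℂ :=
  PowerSeries.mk fun l => ((l + 1 : ℕ) : ℂ) * PowerSeries.coeff (R := ℂ) (l + 1) f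

/-- `|ν| = Σ_{(j,α)} ν_{j,α}` for a multi-index `ν`. -/
def nsum (ν : (ℕ × ℕ) →₀ ℕ) : ℕ := ν.sum fun _ n => n

/-- `(t∂ₜ)^j ∂ₓ^α u` as an element of `ℂ[[x]][[t]]`, for `u` given by its family of
`t`-coefficients `u_k(x) ∈ ℂ[[x]]`. -/
def Dop (j α : ℕ) (u : ℕ → PowerSeries ℂ) : PowerSeries (PowerSeries ℂ) :=
  PowerSeries.mk fun k => ((k : ℂ) ^ j) • (dX^[α] (u k))

/-- `u = Σ_k u_k(x) t^k` is a formal power series solution, with `u(0,x) ≡ 0`, of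
`(t∂ₜ)^m u = F(t,x,{(t∂ₜ)^j ∂ₓ^α u}_{(j,α) ∈ I_m})`, where the holomorphic function `F`
is given through its Taylor expansion
`F(t,x,z) = a(x) t + Σ_{(j,α) ∈ I_m} x^α c_{j,α}(x) z_{j,α} + Σ_{i+|ν| ≥ 2} a_{i,ν}(x) t^i z^ν`
(this encodes the assumptions (A₂) and (A₃): `F(0,x,0) ≡ 0` and `b_{j,α}(x) = x^α c_{j,α}(x)`).
The equation is stated on the coefficient of each power `t^k`; since `u(0,x) ≡ 0` the
nonlinear part only involves the finitely many multi-indices appearing in the sum. -/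
def IsSol (m : ℕ) (a : PowerSeries ℂ) (c : ℕ × ℕ → PowerSeries ℂ)
    (A : ℕ → ((ℕ × ℕ) →₀ ℕ) → PowerSeries ℂ) (u : ℕ → PowerSeries ℂ) : Prop :=
  u 0 = 0 ∧ ∀ k : ℕ,
    ((k : ℂ) ^ m) • u k =
      (if k = 1 then a else 0)
        + ∑ p ∈ ImF m, (X ^ p.2 * c p) * (((k : ℂ) ^ p.1) • (dX^[p.2] (u k)))
        + ∑ i ∈ Finset.range (k + 1), ∑ n ∈ Finset.range (k + 1),
            ∑ ν ∈ Finset.finsuppAntidiag (ImF m) n,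
              A i ν * (PowerSeries.coeff (R := PowerSeries ℂ) (k - i))
                  (∏ p ∈ ImF m, Dop p.1 p.2 u ^ ν p)

/-- (A₁): Cauchy-type estimates on all the Taylor data of `F`, expressing that `F` is
holomorphic on a polydisk centered at the origin of `ℂ_t × ℂ_x × ℂ^N_z`. -/
def HoloData (a : PowerSeries ℂ) (c : ℕ × ℕ → PowerSeries ℂ)
    (A : ℕ → ((ℕ × ℕ) →₀ ℕ) → PowerSeries ℂ) : Prop :=
  ∃ M r : ℝ, 0 < r ∧
    (∀ l, ‖PowerSeries.coeff (R := ℂ) l a‖ ≤ M / r ^ l) ∧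
    (∀ p l, ‖PowerSeries.coeff (R := ℂ) l (c p)‖ ≤ M / r ^ l) ∧
    (∀ i ν l, ‖PowerSeries.coeff (R := ℂ) l (A i ν)‖ ≤ M / r ^ (i + nsum ν + l))

/-- `R₂(t,x,z) = Σ a_{i,ν}(x) t^i z^ν` consists only of terms of total degree `≥ 2`
in `(t,z)`, with `z` indexed by `I_m`. -/
def StructA (m : ℕ) (A : ℕ → ((ℕ × ℕ) →₀ ℕ) → PowerSeries ℂ) : Prop :=
  ∀ i ν, A i ν ≠ 0 → 2 ≤ i + nsum ν ∧ ν.support ⊆ ImF m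

/-- `L(λ,ρ) = λ^m − Σ_{(j,α) ∈ I_m} c_{j,α}(0) λ^j ρ(ρ−1)⋯(ρ−α+1)`, evaluated at `(k,l)`. -/
def Lfun (m : ℕ) (c : ℕ × ℕ → PowerSeries ℂ) (k l : ℕ) : ℂ :=
  (k : ℂ) ^ m - ∑ p ∈ ImF m, PowerSeries.constantCoeff (R := ℂ) (c p) * (k : ℂ) ^ p.1 *
      ∏ i ∈ Finset.range p.2, ((l : ℂ) - (i : ℂ))

/-- The non-resonance condition (N). -/
def Ncond (m : ℕ) (c : ℕ × ℕ → PowerSeries ℂ) : Prop :=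
  ∀ k l : ℕ, 1 ≤ k → Lfun m c k l ≠ 0

/-- `Λ₀ = {(m,0)} ∪ {(j,α) ∈ I_m : c_{j,α}(0) ≠ 0}` (with `c_{m,0} = −1`). -/
def Lam0 (m : ℕ) (c : ℕ × ℕ → PowerSeries ℂ) : Finset (ℕ × ℕ) :=
  insert (m, 0) ((ImF m).filter fun p => PowerSeries.constantCoeff (R := ℂ) (c p) ≠ 0)

/-- The coefficient `c_{j,α}(0)`, with the convention `c_{m,0}(x) = −1`. -/
def cval (m : ℕ) (c : ℕ × ℕ → PowerSeries ℂ) (q : ℕ × ℕ) : ℂ :=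
  if q = (m, 0) then -1 else PowerSeries.constantCoeff (R := ℂ) (c q)

/-- The Newton polygon `N₀` of the equation at `x = 0`: the convex hull of the union of
the quadrants `C(j,α) = {(x,y) : x ≤ j, y ≤ α}` for `(j,α) ∈ Λ₀`. -/
def NP (m : ℕ) (c : ℕ × ℕ → PowerSeries ℂ) : Set (ℝ × ℝ) :=
  convexHull ℝ (⋃ p ∈ Lam0 m c, {q : ℝ × ℝ | q.1 ≤ (p.1 : ℝ) ∧ q.2 ≤ (p.2 : ℝ)})

/-- `φ(λ,ρ) = Σ_{i=1}^p λ^{m_i} ρ^{n_i}`, the sum being over the vertices `(m_i,n_i)`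
of the Newton polygon `N₀` (its extreme points), evaluated at `(k,l)`. -/
def phi (m : ℕ) (c : ℕ × ℕ → PowerSeries ℂ) (k l : ℕ) : ℝ :=
  ∑ᶠ v ∈ Set.extremePoints ℝ (NP m c), (k : ℝ) ^ v.1 * (l : ℝ) ^ v.2

/-- The generalized Poincaré condition (GP): there is a chain of vertices
`(m,0) = (m₁,n₁), (m₂,n₂), …, (m_p,n_p)` (with `m₁ > m₂ > ⋯` and `n₁ < n₂ < ⋯`)
consisting exactly of the vertices (extreme points) of the Newton polygon `N₀`, such that
(i) for each side `Γ_i` joining consecutive vertices, every root of the characteristic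
polynomial `P_i(X) = Σ_{(j,α) ∈ Λ₀ ∩ Γ_i} c_{j,α}(0) X^{j−m_{i+1}}` lies in `ℂ ∖ [0,∞)`, and
(ii) if `m_p ≥ 1`, every root of `P_p(X) = Σ_{(j,α) ∈ Λ₀ ∩ Γ_p} c_{j,α}(0) X^j`
(the sum over the horizontal side) lies in `ℂ ∖ ℕ*`. -/
def GPcond (m : ℕ) (c : ℕ × ℕ → PowerSeries ℂ) : Prop :=
  ∃ (p : ℕ) (V : Fin (p + 1) → ℕ × ℕ),
    V 0 = (m, 0) ∧
    (StrictAnti fun i => (V i).1) ∧ (StrictMono fun i => (V i).2) ∧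
    ((fun q : ℕ × ℕ => ((q.1 : ℝ), (q.2 : ℝ))) '' Set.range V
        = Set.extremePoints ℝ (NP m c)) ∧
    (∀ i : Fin p, ∀ z : ℂ,
        (∑ q ∈ (Lam0 m c).filter (fun q => (((q.1 : ℝ), (q.2 : ℝ)) : ℝ × ℝ)
              ∈ segment ℝ (((V i.castSucc).1 : ℝ), ((V i.castSucc).2 : ℝ))
                           (((V i.succ).1 : ℝ), ((V i.succ).2 : ℝ))),
            cval m c q * z ^ (q.1 - (V i.succ).1)) = 0
        → ¬ ∃ r : ℝ, 0 ≤ r ∧ z = (r : ℂ)) ∧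
    (1 ≤ (V (Fin.last p)).1 →
      ∀ z : ℂ,
        (∑ q ∈ (Lam0 m c).filter
              (fun q => q.2 = (V (Fin.last p)).2 ∧ q.1 ≤ (V (Fin.last p)).1),
            cval m c q * z ^ q.1) = 0
        → ¬ ∃ n : ℕ, 1 ≤ n ∧ z = (n : ℂ))

/-- `Λ₁ = {(j,α) ∈ I_m : c_{j,α}(0) = 0, c_{j,α} ≢ 0}`. -/
def Lam1 (m : ℕ) (c : ℕ × ℕ → PowerSeries ℂ) : Finset (ℕ × ℕ) :=
  (ImF m).filter fun p => PowerSeries.constantCoeff (R := ℂ) (c p) = 0 ∧ c p ≠ 0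

/-- `p_{j,α}`: the order of the zero of `c_{j,α}(x)` at `x = 0`. -/
def pord (c : ℕ × ℕ → PowerSeries ℂ) (p : ℕ × ℕ) : ℕ :=
  sInf {n : ℕ | PowerSeries.coeff (R := ℂ) n (c p) ≠ 0}

/-- `d_{j,α} = min {y ∈ ℝ : (j, α−y) ∈ N₀}`. -/
def dNP (m : ℕ) (c : ℕ × ℕ → PowerSeries ℂ) (p : ℕ × ℕ) : ℝ :=
  sInf {y : ℝ | (((p.1 : ℝ), (p.2 : ℝ) - y) : ℝ × ℝ) ∈ NP m c}

/-- The irregularity `σ₀ = max[1, max_{(j,α) ∈ Λ₁} (p_{j,α}+d_{j,α})/p_{j,α}]`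
of the equation at `x = 0`. -/
def sigma0 (m : ℕ) (c : ℕ × ℕ → PowerSeries ℂ) : ℝ :=
  max 1 (sSup {r : ℝ | ∃ p ∈ Lam1 m c, r = ((pord c p : ℝ) + dNP m c p) / (pord c p : ℝ)})

/-- `L_{μ,j,α} = val((∂_{z_{j,α}} ∂ₓ^μ R₂)(t,0,z))`: the smallest total degree
`i + |ν| − 1` of a monomial `t^i z^{ν − e_{j,α}}` actually appearing (i.e. with
`ν_{j,α} > 0` and `(∂ₓ^μ a_{i,ν})(0) ≠ 0`).  (When the derivative vanishes identically
the set below is empty, `sInf ∅ = 0`, and the corresponding term of `s₀` is the junk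
value `r/0 = 0`, matching the convention `r/∞ = 0` for `val(0) = ∞`.) -/
def Lval (A : ℕ → ((ℕ × ℕ) →₀ ℕ) → PowerSeries ℂ) (μ : ℕ) (p : ℕ × ℕ) : ℕ :=
  sInf {n : ℕ | ∃ i ν, ν p ≠ 0 ∧ PowerSeries.coeff (R := ℂ) μ (A i ν) ≠ 0 ∧ n = i + nsum ν - 1}

/-- The Gevrey index
`s₀ = 1 + max[0, max_{0 ≤ μ < m} max_{(j,α) ∈ I_m} (j+μ+σ₀(α−μ)−m)/L_{μ,j,α}]`. -/
def s0 (m : ℕ) (c : ℕ × ℕ → PowerSeries ℂ)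
    (A : ℕ → ((ℕ × ℕ) →₀ ℕ) → PowerSeries ℂ) : ℝ :=
  1 + max 0 (sSup {r : ℝ | ∃ μ < m, ∃ p ∈ ImF m,
      r = ((p.1 : ℝ) + (μ : ℝ) + sigma0 m c * ((p.2 : ℝ) - (μ : ℝ)) - (m : ℝ)) /
            (Lval A μ p : ℝ)})

/-- `u ∈ G{t,x}_{(s,σ)}`: the series `Σ (u_{k,l}/(k!^{s−1} l!^{σ−1})) t^k x^l`
converges in a neighborhood of the origin (absolute convergence on a small polydisk). -/
def Gevrey (s σ : ℝ) (u : ℕ → PowerSeries ℂ) : Prop :=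
  ∃ r : ℝ, 0 < r ∧ Summable fun q : ℕ × ℕ =>
    ‖PowerSeries.coeff (R := ℂ) q.2 (u q.1)‖ /
        ((q.1.factorial : ℝ) ^ (s - 1) * (q.2.factorial : ℝ) ^ (σ - 1)) * r ^ (q.1 + q.2)

/-- `m_{ν,μ} = max_{(j,α) ∈ K_ν} (j + max{α, μ + σ₀(α−μ)})`, where
`K_ν = {(j,α) : ν_{j,α} > 0}` is the support of the multi-index `ν`. -/
def mvm (m : ℕ) (c : ℕ × ℕ → PowerSeries ℂ) (ν : (ℕ × ℕ) →₀ ℕ) (μ : ℕ) : ℝ :=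
  sSup {r : ℝ | ∃ p ∈ ν.support,
    r = (p.1 : ℝ) + max ((p.2 : ℝ)) ((μ : ℝ) + sigma0 m c * ((p.2 : ℝ) - (μ : ℝ)))}

/-- The reformulated index
`1 + max[0, max_{0≤μ<m} sup_{(i,ν) ∈ J_μ} (m_{ν,μ} − m)/(i+|ν|−1)]`, where
`J_μ = {(i,ν) : i+|ν| ≥ 2, |ν| ≥ 1, (∂ₓ^μ a_{i,ν})(0) ≠ 0}`. -/
def s0' (m : ℕ) (c : ℕ × ℕ → PowerSeries ℂ)
    (A : ℕ → ((ℕ × ℕ) →₀ ℕ) → PowerSeries ℂ) : ℝ :=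
  1 + max 0 (sSup {r : ℝ | ∃ μ < m, ∃ i ν, 2 ≤ i + nsum ν ∧ 1 ≤ nsum ν ∧
      PowerSeries.coeff (R := ℂ) μ (A i ν) ≠ 0 ∧
      r = (mvm m c ν μ - (m : ℝ)) / ((i + nsum ν - 1 : ℕ) : ℝ)})
/-!
Both indices are `1 + max 0 (sup of a set of ratios)`, so it suffices to dominate every
positive ratio of either set by a ratio of the other. A ratio of `s₀` with `L_{μ,j,α} ≥ 1`
has the denominator `i + |ν| - 1` of a monomial `t^i z^ν` realizing the valuation, and its
numerator is one of the terms of `m_{ν,μ} - m`. Conversely `m_{ν,μ} - m` is attained at some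
`(j,α) ∈ K_ν`; there `j + α - m ≤ 0`, so when the ratio is positive its numerator is
`j + μ + σ₀(α - μ) - m`, while its denominator is at least `L_{μ,j,α}`.
-/

lemma nsum_eq_degree (ν : (ℕ × ℕ) →₀ ℕ) : nsum ν = ν.degree := rfl

lemma mem_ImF {m : ℕ} {p : ℕ × ℕ} : p ∈ ImF m ↔ p.1 + p.2 ≤ m ∧ p.1 < m := by
  simp only [ImF, Finset.mem_filter, Finset.mem_product, Finset.mem_range]
  omega

section SupComparison

variable {S T : Set ℝ}

lemma bddAbove_of_forall_nonpos_or_le (hT : BddAbove T)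
    (h : ∀ s ∈ S, s ≤ 0 ∨ ∃ t ∈ T, s ≤ t) : BddAbove S := by
  obtain ⟨b, hb⟩ := hT
  refine ⟨max 0 b, fun s hs => ?_⟩
  rcases h s hs with hs0 | ⟨t, ht, hst⟩
  · exact hs0.trans (le_max_left _ _)
  · exact (hst.trans (hb ht)).trans (le_max_right _ _)

lemma max_zero_csSup_le_of_forall_nonpos_or_le (hT : BddAbove T)
    (h : ∀ s ∈ S, s ≤ 0 ∨ ∃ t ∈ T, s ≤ t) : max 0 (sSup S) ≤ max 0 (sSup T) := by
  refine max_le (le_max_left _ _) (Real.sSup_le (fun s hs => ?_) (le_max_left _ _))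
  rcases h s hs with hs0 | ⟨t, ht, hst⟩
  · exact hs0.trans (le_max_left _ _)
  · exact (hst.trans (le_csSup hT ht)).trans (le_max_right _ _)

lemma max_zero_csSup_eq_of_forall_nonpos_or_le (hS : BddAbove S)
    (hST : ∀ s ∈ S, s ≤ 0 ∨ ∃ t ∈ T, s ≤ t) (hTS : ∀ t ∈ T, t ≤ 0 ∨ ∃ s ∈ S, t ≤ s) :
    max 0 (sSup S) = max 0 (sSup T) :=
  le_antisymm
    (max_zero_csSup_le_of_forall_nonpos_or_le (bddAbove_of_forall_nonpos_or_le hS hTS) hST)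
    (max_zero_csSup_le_of_forall_nonpos_or_le hS hTS)

end SupComparison

lemma div_nonpos_or_le_div {x y D L : ℝ} (hxy : x ≤ max 0 y) (hL : 0 < L) (hLD : L ≤ D) :
    x / D ≤ 0 ∨ x / D ≤ y / L := by
  rcases le_or_gt y 0 with hy | hy
  · left
    exact div_nonpos_of_nonpos_of_nonneg (by simpa [hy] using hxy) (hL.le.trans hLD)
  · right
    calc x / D ≤ y / D := div_le_div_of_nonneg_right (by simpa [hy.le] using hxy) (hL.le.trans hLD)
      _ ≤ y / L := div_le_div_of_nonneg_left hy.le hL hLD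

section StructA

variable {m μ i : ℕ} {A : ℕ → ((ℕ × ℕ) →₀ ℕ) → PowerSeries ℂ} {ν : (ℕ × ℕ) →₀ ℕ}

lemma StructA.two_le_of_coeff_ne_zero (hA : StructA m A)
    (h : PowerSeries.coeff (R := ℂ) μ (A i ν) ≠ 0) : 2 ≤ i + nsum ν :=
  (hA i ν fun h0 => h (by simp [h0])).1

lemma StructA.support_subset_of_coeff_ne_zero (hA : StructA m A)
    (h : PowerSeries.coeff (R := ℂ) μ (A i ν) ≠ 0) : ν.support ⊆ ImF m :=
  (hA i ν fun h0 => h (by simp [h0])).2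

end StructA

section Lval

variable {A : ℕ → ((ℕ × ℕ) →₀ ℕ) → PowerSeries ℂ} {μ : ℕ} {p : ℕ × ℕ}

lemma Lval_le {i : ℕ} {ν : (ℕ × ℕ) →₀ ℕ} (hν : ν p ≠ 0)
    (hA : PowerSeries.coeff (R := ℂ) μ (A i ν) ≠ 0) : Lval A μ p ≤ i + nsum ν - 1 :=
  Nat.sInf_le ⟨i, ν, hν, hA, rfl⟩

lemma exists_Lval_eq (h : Lval A μ p ≠ 0) :
    ∃ i ν, ν p ≠ 0 ∧ PowerSeries.coeff (R := ℂ) μ (A i ν) ≠ 0 ∧ Lval A μ p = i + nsum ν - 1 :=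
  Nat.sInf_mem (Nat.nonempty_of_pos_sInf (Nat.pos_of_ne_zero h))

lemma Lval_pos {m i : ℕ} {ν : (ℕ × ℕ) →₀ ℕ} (hA : StructA m A) (hν : ν p ≠ 0)
    (hAi : PowerSeries.coeff (R := ℂ) μ (A i ν) ≠ 0) : 0 < Lval A μ p := by
  have hmem : Lval A μ p ∈ _ := Nat.sInf_mem ⟨_, i, ν, hν, hAi, rfl⟩
  obtain ⟨i', ν', -, hAi', hL⟩ := hmem
  have h2 := hA.two_le_of_coeff_ne_zero hAi'
  omega

end Lval

def mvmTerm (σ : ℝ) (μ : ℕ) (p : ℕ × ℕ) : ℝ :=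
  (p.1 : ℝ) + max (p.2 : ℝ) ((μ : ℝ) + σ * ((p.2 : ℝ) - (μ : ℝ)))

def s0Numerator (m : ℕ) (σ : ℝ) (μ : ℕ) (p : ℕ × ℕ) : ℝ :=
  (p.1 : ℝ) + (μ : ℝ) + σ * ((p.2 : ℝ) - (μ : ℝ)) - (m : ℝ)

lemma mvmTerm_sub_le {m μ : ℕ} {p : ℕ × ℕ} (σ : ℝ) (hp : p ∈ ImF m) :
    mvmTerm σ μ p - m ≤ max 0 (s0Numerator m σ μ p) := by
  have hpm : (p.1 : ℝ) + p.2 ≤ m := by exact_mod_cast (mem_ImF.1 hp).1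
  unfold mvmTerm s0Numerator
  rcases max_choice (p.2 : ℝ) ((μ : ℝ) + σ * ((p.2 : ℝ) - (μ : ℝ))) with h | h <;> rw [h]
  · linarith [le_max_left 0 ((p.1 : ℝ) + μ + σ * (p.2 - μ) - m)]
  · linarith [le_max_right 0 ((p.1 : ℝ) + μ + σ * (p.2 - μ) - m)]

section mvm

variable {m μ : ℕ} {c : ℕ × ℕ → PowerSeries ℂ} {ν : (ℕ × ℕ) →₀ ℕ}

lemma mvm_eq_sSup_image : mvm m c ν μ = sSup (mvmTerm (sigma0 m c) μ '' ν.support) := by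
  rw [mvm]
  congr 1
  ext r
  simp [mvmTerm, eq_comm]

lemma mvmTerm_le_mvm {p : ℕ × ℕ} (hp : p ∈ ν.support) : mvmTerm (sigma0 m c) μ p ≤ mvm m c ν μ :=
  mvm_eq_sSup_image ▸
    le_csSup (ν.support.finite_toSet.image _).bddAbove (Set.mem_image_of_mem _ hp)

lemma exists_mvm_eq_mvmTerm (hν : ν ≠ 0) :
    ∃ p ∈ ν.support, mvm m c ν μ = mvmTerm (sigma0 m c) μ p := by
  have hne : (mvmTerm (sigma0 m c) μ '' ν.support).Nonempty :=
    (Finset.coe_nonempty.2 (Finsupp.support_nonempty_iff.2 hν)).image _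
  obtain ⟨p, hp, hpeq⟩ := hne.csSup_mem (ν.support.finite_toSet.image _)
  exact ⟨p, hp, mvm_eq_sSup_image.trans hpeq.symm⟩

end mvm

def s0Set (m : ℕ) (c : ℕ × ℕ → PowerSeries ℂ) (A : ℕ → ((ℕ × ℕ) →₀ ℕ) → PowerSeries ℂ) :
    Set ℝ :=
  {r : ℝ | ∃ μ < m, ∃ p ∈ ImF m, r = s0Numerator m (sigma0 m c) μ p / (Lval A μ p : ℝ)}

def s0'Set (m : ℕ) (c : ℕ × ℕ → PowerSeries ℂ) (A : ℕ → ((ℕ × ℕ) →₀ ℕ) → PowerSeries ℂ) :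
    Set ℝ :=
  {r : ℝ | ∃ μ < m, ∃ i ν, 2 ≤ i + nsum ν ∧ 1 ≤ nsum ν ∧
      PowerSeries.coeff (R := ℂ) μ (A i ν) ≠ 0 ∧
      r = (mvm m c ν μ - (m : ℝ)) / ((i + nsum ν - 1 : ℕ) : ℝ)}

section Sets

variable {m : ℕ} {c : ℕ × ℕ → PowerSeries ℂ} {A : ℕ → ((ℕ × ℕ) →₀ ℕ) → PowerSeries ℂ}

lemma s0_eq_one_add_max_sSup_s0Set : s0 m c A = 1 + max 0 (sSup (s0Set m c A)) := rfl

lemma s0'_eq_one_add_max_sSup_s0'Set : s0' m c A = 1 + max 0 (sSup (s0'Set m c A)) := rfl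

lemma bddAbove_s0Set : BddAbove (s0Set m c A) := by
  refine ((Finset.range m ×ˢ ImF m : Finset (ℕ × ℕ × ℕ)).finite_toSet.image
    fun q => s0Numerator m (sigma0 m c) q.1 q.2 / (Lval A q.1 q.2 : ℝ)).bddAbove.mono ?_
  rintro r ⟨μ, hμ, p, hp, rfl⟩
  exact ⟨(μ, p), by simp [hμ, hp], rfl⟩

lemma s0Set_nonpos_or_le_s0'Set (hA : StructA m A) :
    ∀ r ∈ s0Set m c A, r ≤ 0 ∨ ∃ t ∈ s0'Set m c A, r ≤ t := by
  rintro r ⟨μ, hμ, p, hp, rfl⟩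
  by_cases hL : Lval A μ p = 0
  · simp [hL]
  obtain ⟨i, ν, hνp, hAi, hLeq⟩ := exists_Lval_eq hL
  have h2 := hA.two_le_of_coeff_ne_zero hAi
  have hν1 : 1 ≤ nsum ν := (Nat.one_le_iff_ne_zero.2 hνp).trans (nsum_eq_degree ν ▸ ν.le_degree p)
  have hnum : s0Numerator m (sigma0 m c) μ p ≤ mvm m c ν μ - m := by
    have hterm := mvmTerm_le_mvm (m := m) (c := c) (μ := μ) (Finsupp.mem_support_iff.2 hνp)
    have hmax := le_max_right (p.2 : ℝ) ((μ : ℝ) + sigma0 m c * ((p.2 : ℝ) - (μ : ℝ)))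
    unfold s0Numerator
    unfold mvmTerm at hterm
    linarith
  refine Or.inr ⟨_, ⟨μ, hμ, i, ν, h2, hν1, hAi, rfl⟩, ?_⟩
  rw [hLeq]
  exact div_le_div_of_nonneg_right hnum (Nat.cast_nonneg _)

lemma s0'Set_nonpos_or_le_s0Set (hA : StructA m A) :
    ∀ r ∈ s0'Set m c A, r ≤ 0 ∨ ∃ t ∈ s0Set m c A, r ≤ t := by
  rintro r ⟨μ, hμ, i, ν, h2, hν1, hAi, rfl⟩
  have hν0 : ν ≠ 0 := fun h0 => by simp [h0, nsum_eq_degree] at hν1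
  obtain ⟨p, hp, hmvm⟩ := exists_mvm_eq_mvmTerm (m := m) (c := c) (μ := μ) hν0
  have hνp : ν p ≠ 0 := Finsupp.mem_support_iff.1 hp
  have hpI : p ∈ ImF m := hA.support_subset_of_coeff_ne_zero hAi hp
  have hLD : (Lval A μ p : ℝ) ≤ ((i + nsum ν - 1 : ℕ) : ℝ) := by exact_mod_cast Lval_le hνp hAi
  refine (div_nonpos_or_le_div (hmvm ▸ mvmTerm_sub_le _ hpI)
    (by exact_mod_cast Lval_pos hA hνp hAi) hLD).imp_right fun hle => ?_
  exact ⟨_, ⟨μ, hμ, p, hpI, rfl⟩, hle⟩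

end Sets

theorem s0_reformulation_general (m : ℕ)
    (c : ℕ × ℕ → PowerSeries ℂ)
    (A : ℕ → ((ℕ × ℕ) →₀ ℕ) → PowerSeries ℂ)
    (hA2 : StructA m A) :
    s0 m c A = s0' m c A := by
  rw [s0_eq_one_add_max_sSup_s0Set, s0'_eq_one_add_max_sSup_s0'Set,
    max_zero_csSup_eq_of_forall_nonpos_or_le bddAbove_s0Set
      (s0Set_nonpos_or_le_s0'Set hA2) (s0'Set_nonpos_or_le_s0Set hA2)]

/-- **Lemma 4.1** (Lastra–Tahara). Under (A₁), (A₂), (A₃), the Gevrey index `s₀` of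
(2.5) can be expressed in the form (3.17):
`s₀ = 1 + max[0, max_{0≤μ<m} sup_{(i,ν) ∈ J_μ} (m_{ν,μ} − m)/(i+|ν|−1)]`. -/
theorem s0_reformulation (m : ℕ) (hm : 1 ≤ m)
    (a : PowerSeries ℂ) (c : ℕ × ℕ → PowerSeries ℂ)
    (A : ℕ → ((ℕ × ℕ) →₀ ℕ) → PowerSeries ℂ)
    (hA1 : HoloData a c A) (hA2 : StructA m A) :
    s0 m c A = s0' m c A :=
  s0_reformulation_general m c A hA2
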